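/- Let ω be a radial weight with ω̂ doubling and 0 < q < ∞. Define a_k = (ω̂(1-2^{-k})/ω̂(1-2^{-(k+1)}))^{1/q} for k ≥ 1. Then there is a constant C₁ = C₁(q,ω) with 1 < a_k ≤ C₁ for all k, and the infinite product f(z) = ∏_{k=1}^∞ (1 + a_k z^{2^k})/(1 + a_k^{-1} z^{2^k}) defines an analytic function on 𝔻 satisfying M_∞(r,f) ≤ C·(ω̂(r))^{-1/q} for all 0 < r < 1. -/

import Mathlib

/-!
Since `ω̂` is strictly decreasing on `[0, 1)` and doubling, the ratios
`ω̂(1 - 2⁻ᵏ) / ω̂(1 - 2⁻⁽ᵏ⁺¹⁾)` lie in `(1, C₀]`, so `1 < a_k ≤ C₀ ^ (1 / q)`.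
For `a ≥ 1` and `‖w‖ < 1` the factor `(1 + a w) / (1 + a⁻¹ w)` has modulus at most
`(1 + a‖w‖) / (1 + a⁻¹‖w‖)`, hence at most `a` and at most `1 + a‖w‖`, and it differs from `1`
by `O(‖w‖)`; with `w = z ^ 2 ^ k` this gives locally uniform convergence on the disc.
If `1 - 2⁻ᴺ ≤ ‖z‖ < 1 - 2⁻⁽ᴺ⁺¹⁾`, the first `N` factors are bounded by `∏ a_k`, which telescopes to
`(ω̂(1/2) / ω̂(1 - 2⁻⁽ᴺ⁺¹⁾)) ^ (1 / q) ≤ (C₀ ω̂(1/2) / ω̂(‖z‖)) ^ (1 / q)`, while for the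
remaining ones `‖z‖ ^ 2 ^ k ≤ 2 ^ (N - k)`, so their product is at most `exp (C₀ ^ (1 / q))`.
-/

open MeasureTheory Set

/-- The tail integral `ω̂(r) = ∫_r^1 ω(s) ds` of a radial weight. -/
noncomputable def omegaHat (ω : ℝ → ℝ) (r : ℝ) : ℝ := ∫ s in Ico r 1, ω s

/-- The sequence `a_k = (ω̂(1-2^{-k}) / ω̂(1-2^{-(k+1)}))^{1/q}`. -/
noncomputable def aSeq (ω : ℝ → ℝ) (q : ℝ) (k : ℕ) : ℝ :=
  (omegaHat ω (1 - 2 ^ (-(k : ℝ))) / omegaHat ω (1 - 2 ^ (-((k : ℝ) + 1)))) ^ (1 / q)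

open Filter Topology Metric

noncomputable def mobiusFactor (a : ℝ) (w : ℂ) : ℂ := (1 + a * w) / (1 + (a : ℂ)⁻¹ * w)

section MobiusFactor

variable {a : ℝ} {w : ℂ}

lemma one_sub_norm_le_norm_one_add_ofReal_mul {b : ℝ} (hb0 : 0 ≤ b) (hb1 : b ≤ 1) (w : ℂ) :
    1 - ‖w‖ ≤ ‖1 + (b : ℂ) * w‖ := by
  have hbw : ‖(b : ℂ) * w‖ ≤ ‖w‖ := by
    rw [norm_mul, Complex.norm_real, Real.norm_of_nonneg hb0]
    exact mul_le_of_le_one_left (norm_nonneg w) hb1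
  have := norm_sub_norm_le (1 : ℂ) (-((b : ℂ) * w))
  rw [sub_neg_eq_add, norm_neg, norm_one] at this
  linarith

lemma one_add_inv_mul_ne_zero (ha : 1 ≤ a) (hw : ‖w‖ < 1) :
    1 + (a : ℂ)⁻¹ * w ≠ 0 := by
  rw [← Complex.ofReal_inv]
  exact norm_pos_iff.1 <| (sub_pos.2 hw).trans_le <|
    one_sub_norm_le_norm_one_add_ofReal_mul (by positivity) (inv_le_one_of_one_le₀ ha) w

lemma sq_norm_one_add_ofReal_mul (c : ℝ) (w : ℂ) :
    ‖1 + (c : ℂ) * w‖ ^ 2 = 1 + 2 * c * w.re + c ^ 2 * ‖w‖ ^ 2 := by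
  rw [Complex.sq_norm, Complex.sq_norm, Complex.normSq_apply, Complex.normSq_apply]
  simp only [Complex.add_re, Complex.add_im, Complex.mul_re, Complex.mul_im,
    Complex.one_re, Complex.one_im, Complex.ofReal_re, Complex.ofReal_im]
  ring

/-- On the circle `‖w‖ = t` the Möbius map `w ↦ mobiusFactor a w` has its largest modulus at
`w = t`: after squaring, the difference of the two sides is `2 (t - re w) (a - a⁻¹) (1 - t²)`. -/
lemma norm_mobiusFactor_le (ha : 1 ≤ a) (hw : ‖w‖ < 1) :
    ‖mobiusFactor a w‖ ≤ (1 + a * ‖w‖) / (1 + a⁻¹ * ‖w‖) := by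
  have ha0 : 0 < a := by linarith
  have hden : 0 < ‖1 + ((a⁻¹ : ℝ) : ℂ) * w‖ :=
    norm_pos_iff.2 (by simpa using one_add_inv_mul_ne_zero ha hw)
  rw [mobiusFactor, ← Complex.ofReal_inv, norm_div, div_le_div_iff₀ hden (by positivity)]
  refine (pow_le_pow_iff_left₀ (by positivity) (by positivity) two_ne_zero).1 ?_
  rw [mul_pow, mul_pow, sq_norm_one_add_ofReal_mul, sq_norm_one_add_ofReal_mul]
  have hre : w.re ≤ ‖w‖ := Complex.re_le_norm w
  have hinv : a⁻¹ ≤ a := (inv_le_one_of_one_le₀ ha).trans ha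
  have hmul : a * a⁻¹ = 1 := mul_inv_cancel₀ ha0.ne'
  have key : (1 + a * ‖w‖) ^ 2 * (1 + 2 * a⁻¹ * w.re + a⁻¹ ^ 2 * ‖w‖ ^ 2)
      - (1 + 2 * a * w.re + a ^ 2 * ‖w‖ ^ 2) * (1 + a⁻¹ * ‖w‖) ^ 2
      = 2 * (‖w‖ - w.re) * (a - a⁻¹) * (1 - a * a⁻¹ * ‖w‖ ^ 2) := by ring
  rw [hmul, one_mul] at key
  have hw2 : 0 ≤ 1 - ‖w‖ ^ 2 := by nlinarith [norm_nonneg w]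
  nlinarith [mul_nonneg (mul_nonneg (sub_nonneg.2 hre) (sub_nonneg.2 hinv)) hw2]

lemma norm_mobiusFactor_le_self (ha : 1 ≤ a) (hw : ‖w‖ < 1) : ‖mobiusFactor a w‖ ≤ a := by
  refine (norm_mobiusFactor_le ha hw).trans ?_
  have ha0 : 0 < a := by linarith
  rw [div_le_iff₀ (by positivity), mul_add, ← mul_assoc, mul_inv_cancel₀ ha0.ne', one_mul]
  nlinarith

lemma norm_mobiusFactor_le_one_add (ha : 1 ≤ a) (hw : ‖w‖ < 1) :
    ‖mobiusFactor a w‖ ≤ 1 + a * ‖w‖ :=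
  (norm_mobiusFactor_le ha hw).trans <|
    div_le_self (by positivity) (le_add_of_nonneg_right (by positivity))

lemma norm_mobiusFactor_sub_one_le (ha : 1 ≤ a) (hw : ‖w‖ < 1) :
    ‖mobiusFactor a w - 1‖ ≤ a * ‖w‖ / (1 - ‖w‖) := by
  have hden := one_add_inv_mul_ne_zero ha hw
  have hsub : mobiusFactor a w - 1 = ((a - a⁻¹ : ℝ) : ℂ) * w / (1 + ((a⁻¹ : ℝ) : ℂ) * w) := by
    rw [mobiusFactor, div_sub_one hden]
    push_cast
    ring
  have hinv0 : 0 ≤ a⁻¹ := by positivity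
  rw [hsub, norm_div, norm_mul, Complex.norm_real,
    Real.norm_of_nonneg (by linarith [inv_le_one_of_one_le₀ ha])]
  exact div_le_div₀ (by positivity) (by gcongr; linarith) (by linarith)
    (one_sub_norm_le_norm_one_add_ofReal_mul hinv0 (inv_le_one_of_one_le₀ ha) w)

lemma differentiableOn_mobiusFactor_pow (ha : 1 ≤ a) {m : ℕ} (hm : m ≠ 0) :
    DifferentiableOn ℂ (fun z ↦ mobiusFactor a (z ^ m)) (ball 0 1) := by
  refine DifferentiableOn.div (by fun_prop) (by fun_prop) fun z hz ↦ ?_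
  refine one_add_inv_mul_ne_zero ha ?_
  rw [norm_pow]
  exact pow_lt_one₀ (norm_nonneg z) (mem_ball_zero_iff.1 hz) hm

end MobiusFactor

lemma pow_two_pow_le_half_pow {r : ℝ} (hr0 : 0 ≤ r) {N : ℕ} (hr : r ≤ 1 - (1 / 2) ^ (N + 1))
    (j : ℕ) : r ^ 2 ^ (N + j + 1) ≤ (1 / 2) ^ (j + 1) := by
  have hbase : r ^ 2 ^ (N + 1) ≤ 1 / 2 :=
    calc r ^ 2 ^ (N + 1) ≤ (1 - 1 / ((2 ^ (N + 1) : ℕ) : ℝ)) ^ 2 ^ (N + 1) := by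
          gcongr
          simpa using hr
      _ ≤ Real.exp (-1) := Real.one_sub_div_pow_le_exp_neg (by exact_mod_cast Nat.one_le_two_pow)
      _ ≤ 1 / 2 := Real.exp_neg_one_lt_half.le
  calc r ^ 2 ^ (N + j + 1) = (r ^ 2 ^ (N + 1)) ^ 2 ^ j := by
        rw [← pow_mul, ← pow_add, add_right_comm]
    _ ≤ (1 / 2) ^ 2 ^ j := by gcongr
    _ ≤ (1 / 2) ^ (j + 1) := pow_le_pow_of_le_one (by norm_num) (by norm_num) Nat.lt_two_pow_self

section LacunaryProduct

variable {b : ℕ → ℝ} {A : ℝ} {e : ℕ → ℕ}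

lemma hasProdUniformlyOn_mobiusFactor_closedBall (hb : ∀ n, 1 ≤ b n) (hbA : ∀ n, b n ≤ A)
    (he : ∀ n, n < e n) {ρ : ℝ} (hρ0 : 0 ≤ ρ) (hρ1 : ρ < 1) :
    HasProdUniformlyOn (fun n z ↦ mobiusFactor (b n) (z ^ e n))
      (fun z ↦ ∏' n, mobiusFactor (b n) (z ^ e n)) (closedBall 0 ρ) := by
  have hA : 0 ≤ A := zero_le_one.trans ((hb 0).trans (hbA 0))
  have hbound : ∀ n, ∀ z ∈ closedBall (0 : ℂ) ρ,
      ‖mobiusFactor (b n) (z ^ e n) - 1‖ ≤ A * ρ ^ (n + 1) / (1 - ρ) := by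
    intro n z hz
    have hw : ‖z ^ e n‖ ≤ ρ ^ (n + 1) := by
      rw [norm_pow]
      exact (pow_le_pow_left₀ (norm_nonneg z) (mem_closedBall_zero_iff.1 hz) _).trans
        (pow_le_pow_of_le_one hρ0 hρ1.le (he n))
    have hwρ : ‖z ^ e n‖ ≤ ρ := hw.trans (pow_le_of_le_one hρ0 hρ1.le n.succ_ne_zero)
    exact (norm_mobiusFactor_sub_one_le (hb n) (hwρ.trans_lt hρ1)).trans <|
      div_le_div₀ (by positivity) (mul_le_mul (hbA n) hw (norm_nonneg _) hA)
        (by linarith) (by linarith)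
  have hsum : Summable fun n ↦ A * ρ ^ (n + 1) / (1 - ρ) :=
    (((summable_nat_add_iff 1).2 (summable_geometric_of_lt_one hρ0 hρ1)).mul_left A).div_const _
  have hcont : ∀ n, ContinuousOn (fun z ↦ mobiusFactor (b n) (z ^ e n) - 1) (closedBall 0 ρ) :=
    fun n ↦ ((differentiableOn_mobiusFactor_pow (hb n) (Nat.ne_zero_of_lt (he n))).continuousOn.sub
      continuousOn_const).mono (closedBall_subset_ball hρ1)
  simpa using Summable.hasProdUniformlyOn_nat_one_add (isCompact_closedBall 0 ρ) hsum
    (.of_forall hbound) hcont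

lemma hasProdLocallyUniformlyOn_mobiusFactor (hb : ∀ n, 1 ≤ b n) (hbA : ∀ n, b n ≤ A)
    (he : ∀ n, n < e n) :
    HasProdLocallyUniformlyOn (fun n z ↦ mobiusFactor (b n) (z ^ e n))
      (fun z ↦ ∏' n, mobiusFactor (b n) (z ^ e n)) (ball 0 1) := by
  refine hasProdLocallyUniformlyOn_of_of_forall_exists_nhds fun z hz ↦ ?_
  have hz1 : ‖z‖ < 1 := mem_ball_zero_iff.1 hz
  refine ⟨closedBall 0 ((‖z‖ + 1) / 2), mem_nhdsWithin_of_mem_nhds (closedBall_mem_nhds_of_mem ?_),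
    hasProdUniformlyOn_mobiusFactor_closedBall hb hbA he (by positivity) (by linarith)⟩
  rw [mem_ball_zero_iff]
  linarith

lemma differentiableOn_tprod_mobiusFactor (hb : ∀ n, 1 ≤ b n) (hbA : ∀ n, b n ≤ A)
    (he : ∀ n, n < e n) :
    DifferentiableOn ℂ (fun z ↦ ∏' n, mobiusFactor (b n) (z ^ e n)) (ball 0 1) :=
  (hasProdLocallyUniformlyOn_mobiusFactor hb hbA he).differentiableOn
    (.of_forall fun s ↦ by
      simpa [Finset.prod_fn] using DifferentiableOn.finsetProd fun n _ ↦
        differentiableOn_mobiusFactor_pow (hb n) (Nat.ne_zero_of_lt (he n)))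
    isOpen_ball

lemma norm_prod_range_mobiusFactor_le (hb : ∀ n, 1 ≤ b n) (hbA : ∀ n, b n ≤ A) {N : ℕ} {z : ℂ}
    (hz : ‖z‖ ≤ 1 - (1 / 2) ^ (N + 1)) (m : ℕ) :
    ‖∏ k ∈ Finset.range (N + m), mobiusFactor (b k) (z ^ 2 ^ (k + 1))‖
      ≤ (∏ k ∈ Finset.range N, b k) * Real.exp A := by
  have hA : 0 ≤ A := zero_le_one.trans ((hb 0).trans (hbA 0))
  have hz1 : ‖z‖ < 1 := hz.trans_lt (sub_lt_self 1 (by positivity))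
  have hw : ∀ k, ‖z ^ 2 ^ (k + 1)‖ < 1 := fun k ↦ by
    rw [norm_pow]
    exact pow_lt_one₀ (norm_nonneg z) hz1 (by positivity)
  have hhead : ∏ k ∈ Finset.range N, ‖mobiusFactor (b k) (z ^ 2 ^ (k + 1))‖
      ≤ ∏ k ∈ Finset.range N, b k :=
    Finset.prod_le_prod (fun _ _ ↦ norm_nonneg _) fun k _ ↦ norm_mobiusFactor_le_self (hb k) (hw k)
  have htail : ∏ j ∈ Finset.range m, ‖mobiusFactor (b (N + j)) (z ^ 2 ^ (N + j + 1))‖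
      ≤ Real.exp A :=
    calc ∏ j ∈ Finset.range m, ‖mobiusFactor (b (N + j)) (z ^ 2 ^ (N + j + 1))‖
        ≤ ∏ j ∈ Finset.range m, (1 + A * (1 / 2) ^ (j + 1)) := by
          refine Finset.prod_le_prod (fun _ _ ↦ norm_nonneg _) fun j _ ↦ ?_
          refine (norm_mobiusFactor_le_one_add (hb _) (hw _)).trans ?_
          rw [norm_pow]
          gcongr
          · exact hbA _
          · exact pow_two_pow_le_half_pow (norm_nonneg z) hz j
      _ ≤ Real.exp (∑ j ∈ Finset.range m, A * (1 / 2) ^ (j + 1)) :=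
          Real.prod_one_add_le_exp_sum _ fun j ↦ by positivity
      _ ≤ Real.exp A := by
          gcongr
          simp_rw [pow_succ, ← mul_assoc, ← Finset.sum_mul, ← Finset.mul_sum]
          nlinarith [sum_geometric_two_le m]
  rw [Finset.prod_range_add, norm_mul, norm_prod, norm_prod]
  exact mul_le_mul hhead htail (Finset.prod_nonneg fun _ _ ↦ norm_nonneg _)
    (Finset.prod_nonneg fun k _ ↦ zero_le_one.trans (hb k))

end LacunaryProduct

section OmegaHat

variable {ω : ℝ → ℝ}

lemma setIntegral_Ico_pos (hω : ∀ r : ℝ, 0 ≤ r → r < 1 → 0 < ω r)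
    (hint : IntegrableOn ω (Ico 0 1)) {r r' : ℝ} (hr : 0 ≤ r) (hrr' : r < r') (hr' : r' ≤ 1) :
    0 < ∫ s in Ico r r', ω s := by
  have hsub : Ico r r' ⊆ Ico 0 1 := Ico_subset_Ico hr hr'
  have hpos : ∀ s ∈ Ico r r', 0 < ω s := fun s hs ↦ hω s (hsub hs).1 (hsub hs).2
  rw [setIntegral_pos_iff_support_of_nonneg_ae
    ((ae_restrict_iff' measurableSet_Ico).2 (.of_forall fun s hs ↦ (hpos s hs).le))
    (hint.mono_set hsub)]
  refine lt_of_lt_of_le ?_ (measure_mono fun s hs ↦ ⟨(hpos s hs).ne', hs⟩)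
  rw [Real.volume_Ico]
  exact ENNReal.ofReal_pos.2 (sub_pos.2 hrr')

lemma omegaHat_pos (hω : ∀ r : ℝ, 0 ≤ r → r < 1 → 0 < ω r) (hint : IntegrableOn ω (Ico 0 1))
    {r : ℝ} (hr : 0 ≤ r) (hr1 : r < 1) : 0 < omegaHat ω r :=
  setIntegral_Ico_pos hω hint hr hr1 le_rfl

lemma omegaHat_eq_setIntegral_add (hint : IntegrableOn ω (Ico 0 1)) {r r' : ℝ} (hr : 0 ≤ r)
    (hrr' : r ≤ r') (hr' : r' ≤ 1) : omegaHat ω r = (∫ s in Ico r r', ω s) + omegaHat ω r' := by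
  rw [omegaHat, omegaHat, ← setIntegral_union Ico_disjoint_Ico_same measurableSet_Ico
    (hint.mono_set (Ico_subset_Ico hr hr')) (hint.mono_set (Ico_subset_Ico (hr.trans hrr') le_rfl)),
    Ico_union_Ico_eq_Ico hrr' hr']

lemma strictAntiOn_omegaHat (hω : ∀ r : ℝ, 0 ≤ r → r < 1 → 0 < ω r)
    (hint : IntegrableOn ω (Ico 0 1)) : StrictAntiOn (omegaHat ω) (Ico 0 1) := by
  intro r hr r' hr' hrr'
  rw [omegaHat_eq_setIntegral_add hint hr.1 hrr'.le hr'.2.le]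
  linarith [setIntegral_Ico_pos hω hint hr.1 hrr' hr'.2.le]

lemma one_sub_half_pow_mem_Ico (k : ℕ) : 1 - (1 / 2 : ℝ) ^ k ∈ Ico 0 1 :=
  ⟨sub_nonneg.2 (pow_le_one₀ (by norm_num) (by norm_num)), sub_lt_self 1 (by positivity)⟩

lemma aSeq_eq (ω : ℝ → ℝ) (q : ℝ) (k : ℕ) :
    aSeq ω q k = (omegaHat ω (1 - (1 / 2) ^ k) / omegaHat ω (1 - (1 / 2) ^ (k + 1))) ^ (1 / q) := by
  have h : ∀ n : ℕ, (2 : ℝ) ^ (-(n : ℝ)) = (1 / 2) ^ n := fun n ↦ by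
    rw [Real.rpow_neg zero_le_two, Real.rpow_natCast, one_div, inv_pow]
  rw [aSeq, h k, ← h (k + 1)]
  push_cast
  rfl

lemma one_lt_omegaHat_half_pow_div (hω : ∀ r : ℝ, 0 ≤ r → r < 1 → 0 < ω r)
    (hint : IntegrableOn ω (Ico 0 1)) (k : ℕ) :
    1 < omegaHat ω (1 - (1 / 2) ^ k) / omegaHat ω (1 - (1 / 2) ^ (k + 1)) := by
  have hk := one_sub_half_pow_mem_Ico k
  have hk1 := one_sub_half_pow_mem_Ico (k + 1)
  rw [one_lt_div (omegaHat_pos hω hint hk1.1 hk1.2)]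
  refine strictAntiOn_omegaHat hω hint hk hk1 (sub_lt_sub_left ?_ 1)
  exact pow_lt_pow_right_of_lt_one₀ (by norm_num) (by norm_num) k.lt_succ_self

lemma one_lt_aSeq (hω : ∀ r : ℝ, 0 ≤ r → r < 1 → 0 < ω r) (hint : IntegrableOn ω (Ico 0 1))
    {q : ℝ} (hq : 0 < q) (k : ℕ) : 1 < aSeq ω q k := by
  rw [aSeq_eq]
  exact Real.one_lt_rpow (one_lt_omegaHat_half_pow_div hω hint k) (by positivity)

lemma prod_range_div_of_ne_zero {G : ℕ → ℝ} (hG : ∀ k, G k ≠ 0) (N : ℕ) :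
    ∏ k ∈ Finset.range N, G k / G (k + 1) = G 0 / G N := by
  induction N with
  | zero => simp [div_self (hG 0)]
  | succ N ih => rw [Finset.prod_range_succ, ih, div_mul_div_cancel₀ (hG N)]

lemma prod_range_aSeq_succ (hω : ∀ r : ℝ, 0 ≤ r → r < 1 → 0 < ω r)
    (hint : IntegrableOn ω (Ico 0 1)) (q : ℝ) (N : ℕ) :
    ∏ k ∈ Finset.range N, aSeq ω q (k + 1)
      = (omegaHat ω (1 / 2) / omegaHat ω (1 - (1 / 2) ^ (N + 1))) ^ (1 / q) := by
  have hG : ∀ k : ℕ, 0 < omegaHat ω (1 - (1 / 2) ^ k) := fun k ↦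
    omegaHat_pos hω hint (one_sub_half_pow_mem_Ico k).1 (one_sub_half_pow_mem_Ico k).2
  simp_rw [aSeq_eq]
  rw [Real.finsetProd_rpow _ _ fun k _ ↦ (div_pos (hG _) (hG _)).le,
    prod_range_div_of_ne_zero (G := fun k ↦ omegaHat ω (1 - (1 / 2) ^ (k + 1))) fun k ↦ (hG _).ne']
  norm_num

section Doubling

variable {C₀ : ℝ}

lemma omegaHat_le_mul_omegaHat_half_pow_succ (hω : ∀ r : ℝ, 0 ≤ r → r < 1 → 0 < ω r)
    (hint : IntegrableOn ω (Ico 0 1))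
    (hdoub : ∀ r : ℝ, 0 ≤ r → r < 1 → omegaHat ω r ≤ C₀ * omegaHat ω ((1 + r) / 2))
    {N : ℕ} {r : ℝ} (hr : 1 - (1 / 2) ^ N ≤ r) (hr1 : r < 1) :
    omegaHat ω r ≤ C₀ * omegaHat ω (1 - (1 / 2) ^ (N + 1)) := by
  have hmid : (1 + (1 - (1 / 2 : ℝ) ^ N)) / 2 = 1 - (1 / 2) ^ (N + 1) := by ring
  have hN := one_sub_half_pow_mem_Ico N
  rw [← hmid]
  exact ((strictAntiOn_omegaHat hω hint).antitoneOn hN ⟨hN.1.trans hr, hr1⟩ hr).trans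
    (hdoub _ hN.1 hN.2)

lemma doubling_const_pos (hω : ∀ r : ℝ, 0 ≤ r → r < 1 → 0 < ω r)
    (hint : IntegrableOn ω (Ico 0 1))
    (hdoub : ∀ r : ℝ, 0 ≤ r → r < 1 → omegaHat ω r ≤ C₀ * omegaHat ω ((1 + r) / 2)) :
    0 < C₀ := by
  have h := (omegaHat_pos hω hint le_rfl one_pos).trans_le (hdoub 0 le_rfl one_pos)
  exact pos_of_mul_pos_left h (omegaHat_pos hω hint (by norm_num) (by norm_num)).le

lemma aSeq_le (hω : ∀ r : ℝ, 0 ≤ r → r < 1 → 0 < ω r) (hint : IntegrableOn ω (Ico 0 1))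
    (hdoub : ∀ r : ℝ, 0 ≤ r → r < 1 → omegaHat ω r ≤ C₀ * omegaHat ω ((1 + r) / 2))
    {q : ℝ} (hq : 0 < q) (k : ℕ) : aSeq ω q k ≤ C₀ ^ (1 / q) := by
  have hk1 := one_sub_half_pow_mem_Ico (k + 1)
  rw [aSeq_eq]
  gcongr
  · exact (one_lt_omegaHat_half_pow_div hω hint k).le.trans' zero_le_one
  · rw [div_le_iff₀ (omegaHat_pos hω hint hk1.1 hk1.2)]
    exact omegaHat_le_mul_omegaHat_half_pow_succ hω hint hdoub le_rfl
      (one_sub_half_pow_mem_Ico k).2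

lemma prod_range_aSeq_succ_le (hω : ∀ r : ℝ, 0 ≤ r → r < 1 → 0 < ω r)
    (hint : IntegrableOn ω (Ico 0 1))
    (hdoub : ∀ r : ℝ, 0 ≤ r → r < 1 → omegaHat ω r ≤ C₀ * omegaHat ω ((1 + r) / 2))
    {q : ℝ} (hq : 0 < q) {N : ℕ} {r : ℝ} (hr : 1 - (1 / 2) ^ N ≤ r) (hr1 : r < 1) :
    ∏ k ∈ Finset.range N, aSeq ω q (k + 1)
      ≤ (C₀ * omegaHat ω (1 / 2)) ^ (1 / q) * omegaHat ω r ^ (-(1 / q)) := by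
  have hr0 : 0 ≤ r := (one_sub_half_pow_mem_Ico N).1.trans hr
  have hωr := omegaHat_pos hω hint hr0 hr1
  have hN1 := one_sub_half_pow_mem_Ico (N + 1)
  have hG1 : 0 < omegaHat ω (1 / 2) := omegaHat_pos hω hint (by norm_num) (by norm_num)
  have hGN := omegaHat_pos hω hint hN1.1 hN1.2
  have hC₀ := doubling_const_pos hω hint hdoub
  rw [prod_range_aSeq_succ hω hint, Real.rpow_neg hωr.le, ← div_eq_mul_inv,
    ← Real.div_rpow (by positivity) hωr.le]
  gcongr ?_ ^ _
  rw [div_le_div_iff₀ hGN hωr, mul_comm C₀, mul_assoc]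
  exact mul_le_mul_of_nonneg_left
    (omegaHat_le_mul_omegaHat_half_pow_succ hω hint hdoub hr hr1) hG1.le

end Doubling

end OmegaHat

lemma prod_Icc_one_eq_prod_range {M : Type*} [CommMonoid M] (f : ℕ → M) (n : ℕ) :
    ∏ k ∈ Finset.Icc 1 n, f k = ∏ k ∈ Finset.range n, f (k + 1) := by
  rw [← Finset.Ico_add_one_right_eq_Icc, Finset.prod_Ico_eq_prod_range]
  simp [add_comm]

theorem stmt_17_general (q : ℝ) (hq : 0 < q) (ω : ℝ → ℝ)
    (hωpos : ∀ r : ℝ, 0 ≤ r → r < 1 → 0 < ω r)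
    (hωint : IntegrableOn ω (Ico (0 : ℝ) 1))
    (C₀ : ℝ)
    (hdoub : ∀ r : ℝ, 0 ≤ r → r < 1 → omegaHat ω r ≤ C₀ * omegaHat ω ((1 + r) / 2)) :
    (∃ C₁ : ℝ, ∀ k : ℕ, 1 ≤ k → 1 < aSeq ω q k ∧ aSeq ω q k ≤ C₁) ∧
    ∃ f : ℂ → ℂ, AnalyticOnNhd ℂ f (Metric.ball (0 : ℂ) 1) ∧
      (∀ z ∈ Metric.ball (0 : ℂ) 1,
        Filter.Tendsto
          (fun n : ℕ => ∏ k ∈ Finset.Icc 1 n,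
            (1 + (aSeq ω q k : ℂ) * z ^ (2 ^ k)) / (1 + ((aSeq ω q k : ℝ)⁻¹ : ℂ) * z ^ (2 ^ k)))
          Filter.atTop (nhds (f z))) ∧
      ∃ C : ℝ, 0 < C ∧ ∀ z ∈ Metric.ball (0 : ℂ) 1,
        ‖f z‖ ≤ C * (omegaHat ω ‖z‖) ^ (-(1 / q)) := by
  set b : ℕ → ℝ := fun k ↦ aSeq ω q (k + 1)
  have hb : ∀ k, 1 ≤ b k := fun k ↦ (one_lt_aSeq hωpos hωint hq _).le
  have hbA : ∀ k, b k ≤ C₀ ^ (1 / q) := fun k ↦ aSeq_le hωpos hωint hdoub hq _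
  have he : ∀ k, k < 2 ^ (k + 1) := fun k ↦ k.lt_succ_self.trans Nat.lt_two_pow_self
  set f : ℂ → ℂ := fun z ↦ ∏' k, mobiusFactor (b k) (z ^ 2 ^ (k + 1))
  have htend : ∀ z ∈ ball (0 : ℂ) 1, Tendsto (fun n ↦ ∏ k ∈ Finset.Icc 1 n,
      mobiusFactor (aSeq ω q k) (z ^ 2 ^ k)) atTop (𝓝 (f z)) := fun z hz ↦ by
    simpa only [prod_Icc_one_eq_prod_range] using
      ((hasProdLocallyUniformlyOn_mobiusFactor hb hbA he).hasProd hz).tendsto_prod_nat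
  have hG : 0 < omegaHat ω (1 / 2) := omegaHat_pos hωpos hωint (by norm_num) (by norm_num)
  have hC₀ := doubling_const_pos hωpos hωint hdoub
  refine ⟨⟨C₀ ^ (1 / q), fun k _ ↦ ⟨one_lt_aSeq hωpos hωint hq k, aSeq_le hωpos hωint hdoub hq k⟩⟩,
    f, (differentiableOn_tprod_mobiusFactor hb hbA he).analyticOnNhd isOpen_ball, htend,
    (C₀ * omegaHat ω (1 / 2)) ^ (1 / q) * Real.exp (C₀ ^ (1 / q)), by positivity, fun z hz ↦ ?_⟩
  have hz1 : ‖z‖ < 1 := mem_ball_zero_iff.1 hz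
  obtain ⟨N, hN, hN'⟩ := exists_nat_pow_near_of_lt_one (sub_pos.2 hz1) (by linarith [norm_nonneg z])
    (by norm_num : (0 : ℝ) < 1 / 2) (by norm_num)
  refine le_of_tendsto (htend z hz).norm (eventually_atTop.2 ⟨N, fun n hn ↦ ?_⟩)
  obtain ⟨m, rfl⟩ := Nat.exists_eq_add_of_le hn
  rw [prod_Icc_one_eq_prod_range, mul_right_comm]
  refine (norm_prod_range_mobiusFactor_le hb hbA (by linarith) m).trans ?_
  gcongr
  exact prod_range_aSeq_succ_le hωpos hωint hdoub hq (by linarith) hz1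

theorem stmt_17 (q : ℝ) (hq : 0 < q) (ω : ℝ → ℝ)
    (hωpos : ∀ r : ℝ, 0 ≤ r → r < 1 → 0 < ω r)
    (hωint : IntegrableOn ω (Ico (0 : ℝ) 1))
    (C₀ : ℝ) (hC₀ : 1 ≤ C₀)
    (hdoub : ∀ r : ℝ, 0 ≤ r → r < 1 → omegaHat ω r ≤ C₀ * omegaHat ω ((1 + r) / 2)) :
    (∃ C₁ : ℝ, ∀ k : ℕ, 1 ≤ k → 1 < aSeq ω q k ∧ aSeq ω q k ≤ C₁) ∧
    ∃ f : ℂ → ℂ, AnalyticOnNhd ℂ f (Metric.ball (0 : ℂ) 1) ∧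
      (∀ z ∈ Metric.ball (0 : ℂ) 1,
        Filter.Tendsto
          (fun n : ℕ => ∏ k ∈ Finset.Icc 1 n,
            (1 + (aSeq ω q k : ℂ) * z ^ (2 ^ k)) / (1 + ((aSeq ω q k : ℝ)⁻¹ : ℂ) * z ^ (2 ^ k)))
          Filter.atTop (nhds (f z))) ∧
      ∃ C : ℝ, 0 < C ∧ ∀ z ∈ Metric.ball (0 : ℂ) 1,
        ‖f z‖ ≤ C * (omegaHat ω ‖z‖) ^ (-(1 / q)) :=
  stmt_17_general q hq ω hωpos hωint C₀ hdoub
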